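/- arXiv:2509.02200 — 2 statements merged into one kernel-verified Lean document; each statement's English description precedes it below -/
import Mathlib

section
/- Let f ∈ C¹((0,∞)) be such that f and f′ are Lebesgue-integrable on (0,∞). Then for every t ≥ 0 the function P_t^α f is differentiable on (0,∞) with (P_t^α f)′(x) = e^{-t/α} e^{-γ_t/x^α} f′(e^{-t/α} x) for all x > 0, and consequently P_t^α f(x) = −e^{-t/α} ∫_x^∞ e^{-γ_t/r^α} f′(e^{-t/α} r) dr. -/
open MeasureTheory Filter
open Set Topology ENNReal NNReal

/-- The Fréchet distribution `𝓕(α)`, with density `α x^(-α-1) exp(-x^(-α))` on `(0,∞)`. -/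
noncomputable def frechetMeasure (α : ℝ) : Measure ℝ :=
  (volume.restrict (Set.Ioi (0 : ℝ))).withDensity
    (fun x => ENNReal.ofReal (α * x ^ (-α - 1) * Real.exp (-(x ^ (-α)))))

namespace Stmt17Aux

noncomputable def ρ (α : ℝ) : ℝ → ℝ := fun z => α * z ^ (-α - 1) * Real.exp (-(z ^ (-α)))

noncomputable def cdf (α : ℝ) : ℝ → ℝ := fun z => Real.exp (-(z ^ (-α)))

lemma rho_nonneg {α : ℝ} (hα : 0 < α) {z : ℝ} (hz : 0 < z) : 0 ≤ ρ α z := by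
  unfold ρ; positivity

lemma hasDerivAt_cdf {α : ℝ} {y : ℝ} (hy : 0 < y) : HasDerivAt (cdf α) (ρ α y) y := by
  have h1 : HasDerivAt (fun z : ℝ => z ^ (-α)) (-α * y ^ (-α - 1)) y := by
    exact Real.hasDerivAt_rpow_const (Or.inl hy.ne')
  have h2 := (h1.neg).exp
  convert h2 using 1
  · rfl
  · unfold ρ; simp only [Pi.neg_apply]; ring

lemma continuousOn_rpow_neg (α : ℝ) (c : ℝ) : ContinuousOn (fun z : ℝ => z ^ c) (Ioi 0) :=
  fun x hx => (Real.continuousAt_rpow_const x c (Or.inl (ne_of_gt hx))).continuousWithinAt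

lemma continuousOn_cdf (α : ℝ) : ContinuousOn (cdf α) (Ioi 0) :=
  Real.continuous_exp.comp_continuousOn (continuousOn_rpow_neg α (-α)).neg

lemma continuousOn_rho (α : ℝ) : ContinuousOn (ρ α) (Ioi 0) :=
  (continuousOn_const.mul (continuousOn_rpow_neg α (-α - 1))).mul (continuousOn_cdf α)

lemma cdf_tendsto_atTop {α : ℝ} (hα : 0 < α) : Tendsto (cdf α) atTop (𝓝 1) := by
  have h : Tendsto (fun z : ℝ => z ^ (-α)) atTop (𝓝 0) := tendsto_rpow_neg_atTop hα
  have hneg : Tendsto (fun z : ℝ => -(z ^ (-α))) atTop (𝓝 0) := by simpa using h.neg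
  have := (Real.continuous_exp.tendsto 0).comp hneg
  rw [Real.exp_zero] at this; exact this

lemma cdf_tendsto_zero {α : ℝ} (hα : 0 < α) : Tendsto (cdf α) (𝓝[>] 0) (𝓝 0) := by
  have h2 : Tendsto (fun z : ℝ => z ^ (-α)) (𝓝[>] 0) atTop := by
    have h1 : Tendsto (fun z : ℝ => Real.exp (-α * Real.log z)) (𝓝[>] 0) atTop :=
      Real.tendsto_exp_atTop.comp
        (Real.tendsto_log_nhdsGT_zero.const_mul_atBot_of_neg (neg_lt_zero.mpr hα))
    refine h1.congr' ?_
    filter_upwards [self_mem_nhdsWithin] with z hz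
    rw [Real.rpow_def_of_pos hz]; ring_nf
  have := Real.tendsto_exp_atBot.comp (tendsto_neg_atTop_atBot.comp h2)
  exact this

/-- extended cdf, vanishing at `0`. -/
noncomputable def cdfE (α : ℝ) : ℝ → ℝ := fun z => if z ≤ 0 then 0 else cdf α z

lemma cdfE_cont {α : ℝ} (hα : 0 < α) : ContinuousWithinAt (cdfE α) (Ici 0) 0 := by
  rw [← continuousWithinAt_Ioi_iff_Ici]
  have : Tendsto (cdfE α) (𝓝[>] 0) (𝓝 0) := by
    refine (cdf_tendsto_zero hα).congr' ?_
    filter_upwards [self_mem_nhdsWithin] with z (hz : (0:ℝ) < z)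
    simp [cdfE, not_le.mpr hz]
  simpa [ContinuousWithinAt, cdfE] using this

lemma cdfE_deriv {α : ℝ} {y : ℝ} (hy : 0 < y) : HasDerivAt (cdfE α) (ρ α y) y := by
  refine (hasDerivAt_cdf hy).congr_of_eventuallyEq ?_
  filter_upwards [Ioi_mem_nhds hy] with z (hz : (0:ℝ) < z)
  simp [cdfE, not_le.mpr hz]

lemma cdfE_tendsto {α : ℝ} (hα : 0 < α) : Tendsto (cdfE α) atTop (𝓝 1) := by
  refine (cdf_tendsto_atTop hα).congr' ?_
  filter_upwards [Ioi_mem_atTop (0:ℝ)] with z (hz : (0:ℝ) < z)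
  simp [cdfE, not_le.mpr hz]

lemma rho_integrableOn {α : ℝ} (hα : 0 < α) : IntegrableOn (ρ α) (Ioi 0) :=
  integrableOn_Ioi_deriv_of_nonneg (cdfE_cont hα) (fun y hy => cdfE_deriv hy)
    (fun y hy => rho_nonneg hα hy) (cdfE_tendsto hα)

lemma rho_integral_total {α : ℝ} (hα : 0 < α) : ∫ z in Ioi 0, ρ α z = 1 := by
  have := integral_Ioi_of_hasDerivAt_of_tendsto (cdfE_cont hα) (fun y hy => cdfE_deriv hy)
    (rho_integrableOn hα) (cdfE_tendsto hα)
  simpa [cdfE] using this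

lemma rho_integral_Ioi {α : ℝ} (hα : 0 < α) {y : ℝ} (hy : 0 < y) :
    ∫ z in Ioi y, ρ α z = 1 - cdf α y := by
  exact integral_Ioi_of_hasDerivAt_of_tendsto
    (((continuousOn_cdf α).continuousAt (Ioi_mem_nhds hy)).continuousWithinAt)
    (fun z hz => hasDerivAt_cdf (hy.trans hz))
    ((rho_integrableOn hα).mono (Ioi_subset_Ioi hy.le) le_rfl)
    (cdf_tendsto_atTop hα)

lemma rho_integral_Ioc {α : ℝ} (hα : 0 < α) {y : ℝ} (hy : 0 < y) :
    ∫ z in Ioc 0 y, ρ α z = cdf α y := by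
  have hsplit : ∫ z in Ioi 0, ρ α z = (∫ z in Ioc 0 y, ρ α z) + ∫ z in Ioi y, ρ α z := by
    rw [← setIntegral_union (Ioc_disjoint_Ioi le_rfl) measurableSet_Ioi
      ((rho_integrableOn hα).mono Ioc_subset_Ioi_self le_rfl)
      ((rho_integrableOn hα).mono (Ioi_subset_Ioi hy.le) le_rfl),
      Ioc_union_Ioi_eq_Ioi hy.le]
  have h2 := rho_integral_Ioi hα hy
  have h3 := rho_integral_total hα
  linarith [hsplit]

lemma rho_measurable (α : ℝ) : Measurable (ρ α) := by
  unfold ρ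
  fun_prop

lemma frechet_integral_eq (α : ℝ) (hα : 0 < α) (h : ℝ → ℝ) :
    ∫ z, h z ∂(frechetMeasure α) = ∫ z in Ioi 0, ρ α z * h z := by
  have hm : Measurable (fun z => Real.toNNReal (ρ α z)) :=
    measurable_real_toNNReal.comp (rho_measurable α)
  have : frechetMeasure α
      = (volume.restrict (Ioi (0:ℝ))).withDensity (fun z => (Real.toNNReal (ρ α z) : ℝ≥0∞)) := rfl
  rw [this, integral_withDensity_eq_integral_smul hm]
  refine setIntegral_congr_fun measurableSet_Ioi (fun z hz => ?_)
  simp [NNReal.smul_def, Real.coe_toNNReal _ (rho_nonneg hα hz)]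

/-- a `C¹` function integrable with integrable derivative tends to `0` at `+∞`. -/
lemma tendsto_zero_atTop {f : ℝ → ℝ} (hf : ContDiffOn ℝ 1 f (Set.Ioi 0))
    (hf_int : IntegrableOn f (Set.Ioi 0) volume)
    (hf'_int : IntegrableOn (deriv f) (Set.Ioi 0) volume) :
    Tendsto f atTop (𝓝 0) := by
  have hdiff : ∀ y ∈ Ioi (0:ℝ), HasDerivAt f (deriv f y) y := fun y hy =>
    ((hf.contDiffAt ((isOpen_Ioi).mem_nhds hy)).differentiableAt one_ne_zero).hasDerivAt
  set C := ∫ z in Ioi 1, deriv f z with hC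
  have h1 : Tendsto (fun x => ∫ z in (1:ℝ)..x, deriv f z) atTop (𝓝 C) :=
    intervalIntegral_tendsto_integral_Ioi 1
      (hf'_int.mono (Ioi_subset_Ioi zero_le_one) le_rfl) tendsto_id
  have h2 : Tendsto f atTop (𝓝 (f 1 + C)) := by
    refine ((h1.const_add (f 1)).congr' ?_)
    filter_upwards [Ioi_mem_atTop (1:ℝ)] with x (hx : (1:ℝ) < x)
    have : ∫ z in (1:ℝ)..x, deriv f z = f x - f 1 := by
      apply intervalIntegral.integral_eq_sub_of_hasDerivAt
      · intro y hy
        rw [uIcc_of_le hx.le] at hy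
        exact hdiff y (lt_of_lt_of_le zero_lt_one hy.1)
      · rw [intervalIntegrable_iff_integrableOn_Ioc_of_le hx.le]
        exact hf'_int.mono ((Ioc_subset_Ioi_self).trans (Ioi_subset_Ioi zero_le_one)) le_rfl
    rw [this]; ring
  -- now the limit must be 0
  have hL : f 1 + C = 0 := by
    by_contra hL
    set L := f 1 + C with hLdef
    have hev : ∀ᶠ x in atTop, |L| / 2 ≤ ‖f x‖ := by
      have := h2.eventually (eventually_nhds_iff.mpr
        ⟨Metric.ball L (|L|/2), fun y hy => hy, Metric.isOpen_ball,
          Metric.mem_ball_self (by positivity)⟩)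
      filter_upwards [this] with x hx
      have : |f x - L| < |L| / 2 := by simpa [Real.dist_eq] using hx
      have h4 : |L| - |f x| ≤ |L - f x| := abs_sub_abs_le_abs_sub L (f x)
      rw [abs_sub_comm] at h4
      rw [Real.norm_eq_abs]
      linarith
    obtain ⟨A, hA⟩ := (hev.and (Ioi_mem_atTop (0:ℝ))).exists_forall_of_atTop
    have hconst : IntegrableOn (fun _ : ℝ => |L| / 2) (Ioi (max A 0)) volume := by
      refine Integrable.mono (hf_int.mono (Ioi_subset_Ioi (le_max_right A 0)) le_rfl)
        aestronglyMeasurable_const ?_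
      filter_upwards [ae_restrict_mem measurableSet_Ioi] with x hx
      have := hA x (le_of_lt (lt_of_le_of_lt (le_max_left A 0) hx)) |>.1
      simpa [abs_of_nonneg (by positivity : (0:ℝ) ≤ |L|/2)] using this
    rw [integrableOn_const_iff] at hconst
    rcases hconst with h | h
    · exact hL (by simpa using h)
    · simp [Real.volume_Ioi] at h
  rw [hL] at h2
  exact h2

lemma g_integrable {α c y : ℝ} (hα : 0 < α) (hc : 0 < c) (hy : 0 < y) {f : ℝ → ℝ}
    (hfc : ContinuousOn f (Ioi 0)) (hf_int : IntegrableOn f (Ioi 0) volume) :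
    IntegrableOn (fun z => ρ α z * f (c * z)) (Ioi y) volume := by
  have hfcz : IntegrableOn (fun z => f (c * z)) (Ioi y) volume :=
    (integrableOn_Ioi_comp_mul_left_iff f y hc).mpr
      (hf_int.mono (Ioi_subset_Ioi (by positivity)) le_rfl)
  have hmeas : ContinuousOn (fun z => ρ α z * f (c * z)) (Ioi y) := by
    refine ContinuousOn.mul ((continuousOn_rho α).mono (Ioi_subset_Ioi hy.le)) ?_
    refine hfc.comp (continuous_const.mul continuous_id).continuousOn ?_
    intro z hz
    have : 0 < z := hy.trans hz
    exact mem_Ioi.mpr (by positivity)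
  refine Integrable.mono (hfcz.norm.const_mul (α * y ^ (-α - 1)))
    (hmeas.aestronglyMeasurable measurableSet_Ioi) ?_
  filter_upwards [ae_restrict_mem measurableSet_Ioi] with z (hz : y < z)
  have hz0 : 0 < z := hy.trans hz
  have h1 : ρ α z ≤ α * y ^ (-α - 1) := by
    have hr : z ^ (-α - 1) ≤ y ^ (-α - 1) :=
      Real.rpow_le_rpow_of_nonpos hy hz.le (by linarith)
    have he : Real.exp (-(z ^ (-α))) ≤ 1 := by
      rw [Real.exp_le_one_iff]
      simpa using Real.rpow_nonneg hz0.le (-α)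
    calc ρ α z ≤ α * z ^ (-α - 1) * 1 := by
          unfold ρ
          exact mul_le_mul_of_nonneg_left he (by positivity)
      _ ≤ α * y ^ (-α - 1) := by
          rw [mul_one]
          exact mul_le_mul_of_nonneg_left hr hα.le
  rw [norm_mul, norm_mul, norm_norm]
  have hM : (0:ℝ) ≤ α * y ^ (-α - 1) := by positivity
  rw [Real.norm_eq_abs (ρ α z), abs_of_nonneg (rho_nonneg hα hz0),
    Real.norm_eq_abs (α * y ^ (-α - 1)), abs_of_nonneg hM]
  exact mul_le_mul_of_nonneg_right h1 (norm_nonneg _)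

lemma H_eq {g : ℝ → ℝ} {y₀ : ℝ} (hg : IntegrableOn g (Ioi y₀) volume) {y : ℝ} (hy : y₀ ≤ y) :
    ∫ z in Ioi y, g z = (∫ z in Ioi y₀, g z) - ∫ z in y₀..y, g z := by
  rw [intervalIntegral.integral_of_le hy,
    ← Ioc_union_Ioi_eq_Ioi hy,
    setIntegral_union (Ioc_disjoint_Ioi le_rfl) measurableSet_Ioi
      (hg.mono Ioc_subset_Ioi_self le_rfl) (hg.mono (Ioi_subset_Ioi hy) le_rfl)]
  ring

lemma part2_gen {α a γ : ℝ} (hα : 0 < α) (ha : 0 < a) (hγ : 0 ≤ γ) {f G : ℝ → ℝ}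
    (hf'c : ContinuousOn (deriv f) (Ioi 0))
    (hf'_int : IntegrableOn (deriv f) (Ioi 0) volume)
    (h1 : ∀ y : ℝ, 0 < y → HasDerivAt G (a * Real.exp (-γ / y ^ α) * deriv f (a * y)) y)
    (hGlim : Tendsto G atTop (𝓝 0)) {x : ℝ} (hx : 0 < x) :
    G x = -a * ∫ r in Ioi x, Real.exp (-γ / r ^ α) * deriv f (a * r) := by
  have hmeas : ContinuousOn (fun r => a * Real.exp (-γ / r ^ α) * deriv f (a * r)) (Ioi x) := by
    refine ContinuousOn.mul (ContinuousOn.mul continuousOn_const ?_) ?_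
    · refine Real.continuous_exp.comp_continuousOn ?_
      refine ContinuousOn.div continuousOn_const ?_ ?_
      · exact fun r hr => (Real.continuousAt_rpow_const r α
          (Or.inl (ne_of_gt (hx.trans hr)))).continuousWithinAt
      · exact fun r hr => ne_of_gt (Real.rpow_pos_of_pos (hx.trans hr) α)
    · refine hf'c.comp (continuous_const.mul continuous_id).continuousOn ?_
      intro r hr
      have : 0 < r := hx.trans hr
      exact mem_Ioi.mpr (by positivity)
  have hdom : IntegrableOn (fun r => a * ‖deriv f (a * r)‖) (Ioi x) volume := by
    refine Integrable.const_mul ?_ a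
    exact ((integrableOn_Ioi_comp_mul_left_iff (deriv f) x ha).mpr
      (hf'_int.mono (Ioi_subset_Ioi (by positivity)) le_rfl)).norm
  have hint : IntegrableOn (fun r => a * Real.exp (-γ / r ^ α) * deriv f (a * r)) (Ioi x) := by
    refine Integrable.mono hdom (hmeas.aestronglyMeasurable measurableSet_Ioi) ?_
    filter_upwards [ae_restrict_mem measurableSet_Ioi] with r (hr : x < r)
    have hr0 : 0 < r := hx.trans hr
    have he : Real.exp (-γ / r ^ α) ≤ 1 := by
      rw [Real.exp_le_one_iff]
      exact div_nonpos_of_nonpos_of_nonneg (neg_nonpos.mpr hγ) (Real.rpow_pos_of_pos hr0 α).le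
    have he0 : 0 ≤ Real.exp (-γ / r ^ α) := (Real.exp_pos _).le
    rw [norm_mul, norm_mul, Real.norm_eq_abs a, abs_of_pos ha,
      Real.norm_eq_abs (Real.exp _), abs_of_nonneg he0,
      Real.norm_eq_abs (a * ‖deriv f (a * r)‖), abs_of_nonneg (by positivity)]
    calc a * Real.exp (-γ / r ^ α) * ‖deriv f (a * r)‖
        ≤ a * 1 * ‖deriv f (a * r)‖ := by
          exact mul_le_mul_of_nonneg_right (mul_le_mul_of_nonneg_left he ha.le) (norm_nonneg _)
      _ = a * ‖deriv f (a * r)‖ := by ring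
  have key := integral_Ioi_of_hasDerivAt_of_tendsto
    ((h1 x hx).continuousAt.continuousWithinAt)
    (fun y hy => h1 y (hx.trans hy)) hint hGlim
  have : ∫ r in Ioi x, a * Real.exp (-γ / r ^ α) * deriv f (a * r)
      = a * ∫ r in Ioi x, Real.exp (-γ / r ^ α) * deriv f (a * r) := by
    rw [← integral_const_mul]
    congr 1 with r
    ring
  rw [this] at key
  linarith [key]

section Algebra
variable {α t : ℝ}

lemma one_sub_exp_pos (ht : 0 < t) : 0 < 1 - Real.exp (-t) := by
  have : Real.exp (-t) < 1 := Real.exp_lt_one_iff.mpr (by linarith)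
  linarith

lemma c_pos (hα : 0 < α) (ht : 0 < t) : 0 < (1 - Real.exp (-t)) ^ (1/α) :=
  Real.rpow_pos_of_pos (one_sub_exp_pos ht) _

lemma a_rpow (hα : 0 < α) : (Real.exp (-t/α)) ^ (-α) = Real.exp t := by
  rw [Real.rpow_def_of_pos (Real.exp_pos _), Real.log_exp]
  congr 1
  field_simp

lemma c_rpow (hα : 0 < α) (ht : 0 < t) :
    ((1 - Real.exp (-t)) ^ (1/α)) ^ α = 1 - Real.exp (-t) := by
  rw [← Real.rpow_mul (one_sub_exp_pos ht).le, one_div_mul_cancel hα.ne', Real.rpow_one]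

lemma b_rpow (hα : 0 < α) (ht : 0 < t) :
    (Real.exp (-t/α) / (1 - Real.exp (-t)) ^ (1/α)) ^ (-α) = Real.exp t - 1 := by
  have h1 := one_sub_exp_pos ht
  have hc := c_pos hα ht
  rw [Real.div_rpow (Real.exp_pos _).le hc.le, a_rpow hα,
    Real.rpow_neg hc.le, c_rpow hα ht, div_eq_mul_inv, inv_inv]
  rw [mul_sub, mul_one, ← Real.exp_add]
  simp

lemma bx_rpow (hα : 0 < α) (ht : 0 < t) {x : ℝ} (hx : 0 < x) :
    ((Real.exp (-t/α) / (1 - Real.exp (-t)) ^ (1/α)) * x) ^ (-α)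
      = (Real.exp t - 1) / x ^ α := by
  have hb : 0 < Real.exp (-t/α) / (1 - Real.exp (-t)) ^ (1/α) :=
    div_pos (Real.exp_pos _) (c_pos hα ht)
  rw [Real.mul_rpow hb.le hx.le, b_rpow hα ht, Real.rpow_neg hx.le, div_eq_mul_inv]

lemma c_mul_b (hα : 0 < α) (ht : 0 < t) (x : ℝ) :
    (1 - Real.exp (-t)) ^ (1/α) * (Real.exp (-t/α) / (1 - Real.exp (-t)) ^ (1/α) * x)
      = Real.exp (-t/α) * x := by
  have hc := c_pos hα ht
  field_simp

end Algebra

lemma G_eq {α t : ℝ} (hα : 0 < α) (ht : 0 < t) {f : ℝ → ℝ}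
    (hfc : ContinuousOn f (Ioi 0)) (hf_int : IntegrableOn f (Ioi 0) volume)
    {x : ℝ} (hx : 0 < x) :
    ∫ z, f (max (Real.exp (-t/α) * x) ((1 - Real.exp (-t)) ^ (1/α) * z)) ∂(frechetMeasure α)
      = f (Real.exp (-t/α) * x)
          * cdf α (Real.exp (-t/α) / (1 - Real.exp (-t)) ^ (1/α) * x)
        + ∫ z in Ioi (Real.exp (-t/α) / (1 - Real.exp (-t)) ^ (1/α) * x),
            ρ α z * f ((1 - Real.exp (-t)) ^ (1/α) * z) := by
  set a := Real.exp (-t/α) with ha_def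
  set c := (1 - Real.exp (-t)) ^ (1/α) with hc_def
  have ha : 0 < a := Real.exp_pos _
  have hc : 0 < c := c_pos hα ht
  set b := a / c with hb_def
  have hb : 0 < b := div_pos ha hc
  have hbx : 0 < b * x := by positivity
  have hcb : c * (b * x) = a * x := c_mul_b hα ht x
  rw [frechet_integral_eq α hα]
  have hsplit : Ioi (0:ℝ) = Ioc 0 (b*x) ∪ Ioi (b*x) := (Ioc_union_Ioi_eq_Ioi hbx.le).symm
  have heq1 : EqOn (fun z => ρ α z * f (max (a * x) (c * z)))
      (fun z => ρ α z * f (a * x)) (Ioc 0 (b*x)) := by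
    intro z hz
    have : c * z ≤ a * x := by
      calc c * z ≤ c * (b * x) := mul_le_mul_of_nonneg_left hz.2 hc.le
        _ = a * x := hcb
    simp only [max_eq_left this]
  have heq2 : EqOn (fun z => ρ α z * f (max (a * x) (c * z)))
      (fun z => ρ α z * f (c * z)) (Ioi (b*x)) := by
    intro z hz
    have : a * x ≤ c * z := by
      calc a * x = c * (b * x) := hcb.symm
        _ ≤ c * z := mul_le_mul_of_nonneg_left (le_of_lt hz) hc.le
    simp only [max_eq_right this]
  have hint1 : IntegrableOn (fun z => ρ α z * f (max (a * x) (c * z))) (Ioc 0 (b*x)) := by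
    have : IntegrableOn (fun z => ρ α z * f (a * x)) (Ioc 0 (b*x)) :=
      ((rho_integrableOn hα).mono Ioc_subset_Ioi_self le_rfl).mul_const (f (a * x))
    exact this.congr_fun (fun z hz => (heq1 hz).symm) measurableSet_Ioc
  have hint2 : IntegrableOn (fun z => ρ α z * f (max (a * x) (c * z))) (Ioi (b*x)) :=
    IntegrableOn.congr_fun (g_integrable hα hc hbx hfc hf_int)
      (fun z hz => (heq2 hz).symm) measurableSet_Ioi
  rw [hsplit, setIntegral_union (Ioc_disjoint_Ioi le_rfl) measurableSet_Ioi hint1 hint2]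
  congr 1
  · rw [setIntegral_congr_fun measurableSet_Ioc heq1, integral_mul_const,
      rho_integral_Ioc hα hbx, mul_comm]
  · exact setIntegral_congr_fun measurableSet_Ioi heq2

lemma frechet_univ {α : ℝ} (hα : 0 < α) : frechetMeasure α Set.univ = 1 := by
  have h1 : frechetMeasure α Set.univ
      = ∫⁻ z, ENNReal.ofReal (ρ α z) ∂(volume.restrict (Ioi 0)) := by
    rw [frechetMeasure, withDensity_apply _ MeasurableSet.univ, Measure.restrict_univ]
    rfl
  rw [h1, ← ofReal_integral_eq_lintegral_ofReal (rho_integrableOn hα)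
    ((ae_restrict_mem measurableSet_Ioi).mono fun z hz => rho_nonneg hα hz),
    rho_integral_total hα, ENNReal.ofReal_one]

end Stmt17Aux



open Stmt17Aux in
theorem stmt17 (α : ℝ) (hα : 0 < α)
    (f : ℝ → ℝ) (hf : ContDiffOn ℝ 1 f (Set.Ioi 0))
    (hf_int : IntegrableOn f (Set.Ioi 0) volume)
    (hf'_int : IntegrableOn (deriv f) (Set.Ioi 0) volume)
    (t : ℝ) (ht : 0 ≤ t) :
    (∀ x : ℝ, 0 < x →
      HasDerivAt
        (fun x : ℝ => ∫ z, f (max (Real.exp (-t / α) * x)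
            ((1 - Real.exp (-t)) ^ (1 / α) * z)) ∂(frechetMeasure α))
        (Real.exp (-t / α) * Real.exp (-(Real.exp t - 1) / x ^ α)
          * deriv f (Real.exp (-t / α) * x)) x) ∧
    (∀ x : ℝ, 0 < x →
      (∫ z, f (max (Real.exp (-t / α) * x)
          ((1 - Real.exp (-t)) ^ (1 / α) * z)) ∂(frechetMeasure α))
        = -Real.exp (-t / α) *
            ∫ r in Set.Ioi x, Real.exp (-(Real.exp t - 1) / r ^ α)
              * deriv f (Real.exp (-t / α) * r)) := by
  have hfc : ContinuousOn f (Ioi 0) := hf.continuousOn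
  have hfd : ∀ y ∈ Ioi (0:ℝ), HasDerivAt f (deriv f y) y := fun y hy =>
    ((hf.contDiffAt ((isOpen_Ioi).mem_nhds hy)).differentiableAt one_ne_zero).hasDerivAt
  have hf'c : ContinuousOn (deriv f) (Ioi 0) :=
    hf.continuousOn_deriv_of_isOpen isOpen_Ioi le_rfl
  have hflim : Tendsto f atTop (𝓝 0) := tendsto_zero_atTop hf hf_int hf'_int
  have ha : (0:ℝ) < Real.exp (-t/α) := Real.exp_pos _
  have hγ : (0:ℝ) ≤ Real.exp t - 1 := by
    have := Real.one_le_exp ht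
    linarith
  set G := fun x : ℝ => ∫ z, f (max (Real.exp (-t / α) * x)
      ((1 - Real.exp (-t)) ^ (1 / α) * z)) ∂(frechetMeasure α) with hG_def
  -- reduce everything to part 1 plus a limit statement
  suffices hmain : (∀ x : ℝ, 0 < x →
      HasDerivAt G (Real.exp (-t / α) * Real.exp (-(Real.exp t - 1) / x ^ α)
        * deriv f (Real.exp (-t / α) * x)) x) ∧ Tendsto G atTop (𝓝 0) by
    exact ⟨hmain.1, fun x hx => part2_gen hα ha hγ hf'c hf'_int hmain.1 hmain.2 hx⟩
  rcases eq_or_lt_of_le ht with h0 | htpos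
  · -- case t = 0
    have hGf : G = fun x => f (max x 0) := by
      funext x
      rw [hG_def]
      have hc0 : (1 - Real.exp (-t)) ^ (1/α) = 0 := by
        rw [← h0]
        simp only [neg_zero, Real.exp_zero, sub_self]
        exact Real.zero_rpow (by positivity : (0:ℝ) < 1/α).ne'
      have ha1 : Real.exp (-t/α) = 1 := by rw [← h0]; simp
      simp only [hc0, ha1, one_mul, zero_mul]
      rw [integral_const, measureReal_def, frechet_univ hα]
      simp
    constructor
    · intro x hx
      have hval : Real.exp (-t / α) * Real.exp (-(Real.exp t - 1) / x ^ α)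
          * deriv f (Real.exp (-t / α) * x) = deriv f x := by
        rw [← h0]; simp
      rw [hGf, hval]
      refine (hfd x hx).congr_of_eventuallyEq ?_
      filter_upwards [Ioi_mem_nhds hx] with y (hy : (0:ℝ) < y)
      rw [max_eq_left hy.le]
    · rw [hGf]
      refine hflim.congr' ?_
      filter_upwards [Ioi_mem_atTop (0:ℝ)] with y (hy : (0:ℝ) < y)
      rw [max_eq_left hy.le]
  · -- case t > 0
    set a := Real.exp (-t/α) with ha_def
    set c := (1 - Real.exp (-t)) ^ (1/α) with hc_def
    have hc : 0 < c := c_pos hα htpos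
    set b := a / c with hb_def
    have hb : 0 < b := div_pos ha hc
    set g := fun z => ρ α z * f (c * z) with hg_def
    have hgint : ∀ y : ℝ, 0 < y → IntegrableOn g (Ioi y) volume :=
      fun y hy => g_integrable hα hc hy hfc hf_int
    have hgc : ContinuousOn g (Ioi 0) := by
      refine (continuousOn_rho α).mul (hfc.comp (continuous_const.mul continuous_id).continuousOn ?_)
      intro z hz
      have hz' : 0 < z := hz
      exact mem_Ioi.mpr (by positivity)
    set H := fun y : ℝ => ∫ z in Ioi y, g z with hH_def
    have hGeq : ∀ x : ℝ, 0 < x → G x = f (a * x) * cdf α (b * x) + H (b * x) :=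
      fun x hx => G_eq hα htpos hfc hf_int hx
    have hHd : ∀ y : ℝ, 0 < y → HasDerivAt H (-(g y)) y := by
      intro y hy
      have hy2 : 0 < y / 2 := by positivity
      have hilem : HasDerivAt (fun u => ∫ z in (y/2)..u, g z) (g y) y := by
        refine intervalIntegral.integral_hasDerivAt_right ?_ ?_ ?_
        · rw [intervalIntegrable_iff_integrableOn_Ioc_of_le (by linarith)]
          exact (hgint _ hy2).mono Ioc_subset_Ioi_self le_rfl
        · exact ContinuousOn.stronglyMeasurableAtFilter isOpen_Ioi hgc y hy
        · exact hgc.continuousAt (isOpen_Ioi.mem_nhds hy)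
      have := (hilem.const_sub (∫ z in Ioi (y/2), g z))
      refine this.congr_of_eventuallyEq ?_
      filter_upwards [Ioi_mem_nhds (show y/2 < y by linarith)] with u (hu : y/2 < u)
      exact H_eq (hgint _ hy2) hu.le
    constructor
    · intro x hx
      have hbx : 0 < b * x := by positivity
      have hax : 0 < a * x := by positivity
      -- derivative of each piece
      have hlin : ∀ k : ℝ, HasDerivAt (fun x' : ℝ => k * x') k x := by
        intro k
        simpa using (hasDerivAt_id x).const_mul k
      have hd1 : HasDerivAt (fun x' => f (a * x')) (deriv f (a * x) * a) x :=
        (hfd _ hax).comp x (hlin a)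
      have hd2 : HasDerivAt (fun x' => cdf α (b * x')) (ρ α (b * x) * b) x :=
        (hasDerivAt_cdf hbx).comp x (hlin b)
      have hd3 : HasDerivAt (fun x' => H (b * x')) (-(g (b * x)) * b) x :=
        (hHd _ hbx).comp x (hlin b)
      have hsum := (hd1.mul hd2).add hd3
      have hcb : c * (b * x) = a * x := c_mul_b hα htpos x
      have hval : deriv f (a * x) * a * cdf α (b * x)
            + f (a * x) * (ρ α (b * x) * b) + -(g (b * x)) * b
          = a * Real.exp (-(Real.exp t - 1) / x ^ α) * deriv f (a * x) := by
        have hcdf : cdf α (b * x) = Real.exp (-(Real.exp t - 1) / x ^ α) := by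
          rw [cdf, bx_rpow hα htpos hx, neg_div]
        rw [hg_def]
        simp only [hcb]
        rw [hcdf]
        ring
      rw [← hval]
      refine hsum.congr_of_eventuallyEq ?_
      filter_upwards [Ioi_mem_nhds hx] with x' (hx' : (0:ℝ) < x')
      exact hGeq x' hx'
    · -- limit at infinity
      have hbtop : Tendsto (fun x : ℝ => b * x) atTop atTop :=
        Tendsto.const_mul_atTop hb tendsto_id
      have hatop : Tendsto (fun x : ℝ => a * x) atTop atTop :=
        Tendsto.const_mul_atTop ha tendsto_id
      have h1 : Tendsto (fun x => f (a * x) * cdf α (b * x)) atTop (𝓝 0) := by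
        have hn : Tendsto (fun x => ‖f (a * x)‖) atTop (𝓝 0) := by
          simpa using (hflim.comp hatop).norm
        refine squeeze_zero_norm' ?_ hn
        filter_upwards [Ioi_mem_atTop (0:ℝ)] with x (hx : (0:ℝ) < x)
        have hbx : (0:ℝ) < b * x := by positivity
        have hcdf1 : |cdf α (b * x)| ≤ 1 := by
          rw [cdf, abs_of_pos (Real.exp_pos _), Real.exp_le_one_iff]
          simpa using Real.rpow_nonneg hbx.le (-α)
        rw [norm_mul]
        calc ‖f (a * x)‖ * ‖cdf α (b * x)‖ ≤ ‖f (a * x)‖ * 1 :=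
              mul_le_mul_of_nonneg_left (by simpa using hcdf1) (norm_nonneg _)
          _ = ‖f (a * x)‖ := mul_one _
      have h2 : Tendsto (fun x => H (b * x)) atTop (𝓝 0) := by
        have hHtop : Tendsto H atTop (𝓝 0) := by
          have hi : Tendsto (fun y => ∫ z in (1:ℝ)..y, g z) atTop
              (𝓝 (∫ z in Ioi (1:ℝ), g z)) :=
            intervalIntegral_tendsto_integral_Ioi 1 (hgint 1 one_pos) tendsto_id
          have := tendsto_const_nhds (x := (∫ z in Ioi (1:ℝ), g z)) (f := atTop (α := ℝ)) |>.sub hi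
          rw [sub_self] at this
          refine this.congr' ?_
          filter_upwards [Ioi_mem_atTop (1:ℝ)] with y (hy : (1:ℝ) < y)
          exact (H_eq (hgint 1 one_pos) hy.le).symm
        exact hHtop.comp hbtop
      have := h1.add h2
      rw [add_zero] at this
      refine this.congr' ?_
      filter_upwards [Ioi_mem_atTop (0:ℝ)] with x (hx : (0:ℝ) < x)
      exact (hGeq x hx).symm
end

section
/- Let f ∈ C²((0,∞)) be such that f and f′ are Lebesgue-integrable on (0,∞). Then for every x ∈ (0,∞) all the compositions below are well defined (the integrals involved converge absolutely) and the commutator identities hold pointwise: δ_α(D_α f)(x) − D_α(δ_α f)(x) = f(x); L_α(D_α f)(x) − D_α(L_α f)(x) = D_α f(x); δ_α(L_α f)(x) − L_α(δ_α f)(x) = δ_α f(x). -/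
open MeasureTheory Filter
open Topology

/-- `D_α f (x) = ∫_x^∞ (f(r) - f(x)) α r^(-α-1) dr`. -/
noncomputable def Dop (α : ℝ) (f : ℝ → ℝ) (x : ℝ) : ℝ :=
  ∫ r in Set.Ioi x, (f r - f x) * (α * r ^ (-α - 1))

/-- `δ_α f (x) = α⁻¹ x^(α+1) f'(x) + f(x)`. -/
noncomputable def deltaOp (α : ℝ) (f : ℝ → ℝ) (x : ℝ) : ℝ :=
  α⁻¹ * x ^ (α + 1) * deriv f x + f x

/-- `L_α f (x) = -α⁻¹ x f'(x) + D_α f (x)`. -/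
noncomputable def Lop (α : ℝ) (f : ℝ → ℝ) (x : ℝ) : ℝ :=
  -α⁻¹ * x * deriv f x + Dop α f x

theorem stmt19 (α : ℝ) (hα : 0 < α)
    (f : ℝ → ℝ) (hf : ContDiffOn ℝ 2 f (Set.Ioi 0))
    (hf_int : IntegrableOn f (Set.Ioi 0) volume)
    (hf'_int : IntegrableOn (deriv f) (Set.Ioi 0) volume)
    (x : ℝ) (hx : 0 < x) :
    IntegrableOn (fun r => (f r - f x) * (α * r ^ (-α - 1))) (Set.Ioi x) volume ∧
    IntegrableOn (fun r => (deltaOp α f r - deltaOp α f x) * (α * r ^ (-α - 1)))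
        (Set.Ioi x) volume ∧
    IntegrableOn (fun r => (Lop α f r - Lop α f x) * (α * r ^ (-α - 1)))
        (Set.Ioi x) volume ∧
    IntegrableOn (fun r => (Dop α f r - Dop α f x) * (α * r ^ (-α - 1)))
        (Set.Ioi x) volume ∧
    DifferentiableAt ℝ (Dop α f) x ∧
    deltaOp α (Dop α f) x - Dop α (deltaOp α f) x = f x ∧
    Lop α (Dop α f) x - Dop α (Lop α f) x = Dop α f x ∧
    deltaOp α (Lop α f) x - Lop α (deltaOp α f) x = deltaOp α f x := by
  have hα0 : α ≠ 0 := hα.ne'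
  have hsub : Set.Ioi x ⊆ Set.Ioi 0 := Set.Ioi_subset_Ioi hx.le
  -- differentiability facts
  have hfd : ∀ y ∈ Set.Ioi (0:ℝ), HasDerivAt f (deriv f y) y := fun y hy =>
    ((hf.differentiableOn (by norm_num)).differentiableAt (isOpen_Ioi.mem_nhds hy)).hasDerivAt
  have hfd2 : ∀ y ∈ Set.Ioi (0:ℝ), HasDerivAt (deriv f) (deriv (deriv f) y) y := fun y hy =>
    (((hf.deriv_of_isOpen (m := 1) isOpen_Ioi (by norm_num)).differentiableOn
      (by norm_num)).differentiableAt (isOpen_Ioi.mem_nhds hy)).hasDerivAt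
  -- continuity of powers
  have hpc : ∀ s : ℝ, ContinuousOn (fun r : ℝ => r ^ s) (Set.Ioi 0) := fun s r hr =>
    (Real.continuousAt_rpow_const r s (Or.inl (ne_of_gt hr))).continuousWithinAt
  -- integrability of products with powers
  have hmul : ∀ y : ℝ, 0 < y → ∀ s : ℝ, s ≤ 0 → ∀ h : ℝ → ℝ,
      IntegrableOn h (Set.Ioi y) volume →
      IntegrableOn (fun r => h r * r ^ s) (Set.Ioi y) volume := by
    intro y hy s hs h hh
    have hm : AEStronglyMeasurable (fun r : ℝ => h r * r ^ s)
        (volume.restrict (Set.Ioi y)) :=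
      hh.aestronglyMeasurable.mul
        (((hpc s).mono (Set.Ioi_subset_Ioi hy.le)).aestronglyMeasurable measurableSet_Ioi)
    refine Integrable.mono' (hh.norm.mul_const (y ^ s)) hm ?_
    rw [ae_restrict_iff' measurableSet_Ioi]
    filter_upwards with r hr
    have h0 : (0:ℝ) < r := hy.trans hr
    have h1 : r ^ s ≤ y ^ s := Real.rpow_le_rpow_of_nonpos hy (le_of_lt hr) hs
    calc ‖h r * r ^ s‖ = ‖h r‖ * ‖r ^ s‖ := norm_mul _ _
      _ ≤ ‖h r‖ * (y ^ s) := by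
          rw [Real.norm_of_nonneg (Real.rpow_nonneg h0.le _)]
          exact mul_le_mul_of_nonneg_left h1 (norm_nonneg _)
  have hwint : ∀ y : ℝ, 0 < y →
      IntegrableOn (fun r : ℝ => α * r ^ (-α - 1)) (Set.Ioi y) volume := fun y hy =>
    (integrableOn_Ioi_rpow_of_lt (by linarith) hy).const_mul α
  have hwval : ∀ y : ℝ, 0 < y → ∫ r in Set.Ioi y, α * r ^ (-α - 1) = y ^ (-α) := by
    intro y hy
    rw [MeasureTheory.integral_const_mul, integral_Ioi_rpow_of_lt (by linarith) hy]
    rw [show -α - 1 + 1 = -α by ring]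
    field_simp
  have hbmul : ∀ y : ℝ, 0 < y → ∀ h : ℝ → ℝ, IntegrableOn h (Set.Ioi y) volume →
      IntegrableOn (fun r => h r * (α * r ^ (-α - 1))) (Set.Ioi y) volume := by
    intro y hy h hh
    have e : (fun r => h r * (α * r ^ (-α - 1))) = fun r => α * (h r * r ^ (-α - 1)) :=
      funext fun r => by ring
    rw [e]
    exact (hmul y hy (-α - 1) (by linarith) h hh).const_mul α
  have hfw : ∀ y : ℝ, 0 < y →
      IntegrableOn (fun r => f r * (α * r ^ (-α - 1))) (Set.Ioi y) volume := fun y hy =>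
    hbmul y hy f (hf_int.mono_set (Set.Ioi_subset_Ioi hy.le))
  -- derivative of the tail integral
  have hgderiv : ∀ y ∈ Set.Ioi (0:ℝ),
      HasDerivAt (fun z => ∫ r in Set.Ioi z, f r * (α * r ^ (-α - 1)))
        (-(f y * (α * y ^ (-α - 1)))) y := by
    intro y hy
    have hy' : (0:ℝ) < y := hy
    have hy2 : (0:ℝ) < y/2 := by linarith
    have hyy : y/2 < y := by linarith
    have hint : IntegrableOn (fun r => f r * (α * r ^ (-α - 1))) (Set.Ioi (y/2)) volume :=
      hfw _ hy2
    have heq : Set.EqOn (fun z => ∫ r in Set.Ioi z, f r * (α * r ^ (-α - 1)))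
        (fun z => (∫ r in Set.Ioi (y/2), f r * (α * r ^ (-α - 1)))
          - ∫ u in (y/2)..z, f u * (α * u ^ (-α - 1))) (Set.Ioi (y/2)) := by
      intro z hz
      have hz' : y/2 < z := hz
      simp only
      rw [intervalIntegral.integral_of_le hz'.le]
      have hsplit : Set.Ioc (y/2) z ∪ Set.Ioi z = Set.Ioi (y/2) :=
        Set.Ioc_union_Ioi_eq_Ioi hz'.le
      rw [← hsplit, MeasureTheory.setIntegral_union (Set.Ioc_disjoint_Ioi le_rfl)
        measurableSet_Ioi
        (hint.mono_set (by rw [← hsplit]; exact Set.subset_union_left))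
        (hint.mono_set (by rw [← hsplit]; exact Set.subset_union_right))]
      ring
    have hcont : ContinuousAt (fun r => f r * (α * r ^ (-α - 1))) y := by
      have h1 : ContinuousAt f y := (hfd y hy).continuousAt
      have h2 : ContinuousAt (fun r : ℝ => r ^ (-α - 1)) y :=
        Real.continuousAt_rpow_const y _ (Or.inl (ne_of_gt hy'))
      exact h1.mul (continuousAt_const.mul h2)
    have hmeas : StronglyMeasurableAtFilter (fun r => f r * (α * r ^ (-α - 1)))
        (𝓝 y) volume :=
      ⟨Set.Ioi (0:ℝ), isOpen_Ioi.mem_nhds hy,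
        hf_int.aestronglyMeasurable.mul
          ((continuousOn_const.mul (hpc (-α - 1))).aestronglyMeasurable measurableSet_Ioi)⟩
    have hii : IntervalIntegrable (fun r => f r * (α * r ^ (-α - 1))) volume (y/2) y := by
      rw [intervalIntegrable_iff_integrableOn_Ioc_of_le hyy.le]
      exact hint.mono_set Set.Ioc_subset_Ioi_self
    have hD := (intervalIntegral.integral_hasDerivAt_right hii hmeas hcont).const_sub
      (∫ r in Set.Ioi (y/2), f r * (α * r ^ (-α - 1)))
    exact hD.congr_of_eventuallyEq
      (Filter.eventuallyEq_of_mem (isOpen_Ioi.mem_nhds hyy) heq)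
  -- Dop in closed form
  have hKeyA : ∀ y : ℝ, 0 < y → Dop α f y =
      (∫ r in Set.Ioi y, f r * (α * r ^ (-α - 1))) - f y * y ^ (-α) := by
    intro y hy
    have h1 := hfw y hy
    have h2 : IntegrableOn (fun r => f y * (α * r ^ (-α - 1))) (Set.Ioi y) volume :=
      (hwint y hy).const_mul (f y)
    simp only [Dop, sub_mul]
    rw [integral_sub h1 h2, MeasureTheory.integral_const_mul, hwval y hy]
  have hKeyD : ∀ y : ℝ, 0 < y →
      HasDerivAt (Dop α f) (-(y ^ (-α)) * deriv f y) y := by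
    intro y hy
    have h1 : HasDerivAt (fun z : ℝ => z ^ (-α)) (-α * y ^ (-α - 1)) y := by
      simpa using Real.hasDerivAt_rpow_const (x := y) (p := -α) (Or.inl (ne_of_gt hy))
    have h2 : HasDerivAt (fun z => f z * z ^ (-α))
        (deriv f y * y ^ (-α) + f y * (-α * y ^ (-α - 1))) y := (hfd y hy).mul h1
    have h3 := (hgderiv y hy).sub h2
    have h4 : Dop α f =ᶠ[𝓝 y]
        fun z => (∫ r in Set.Ioi z, f r * (α * r ^ (-α - 1))) - f z * z ^ (-α) :=
      Filter.eventuallyEq_of_mem (isOpen_Ioi.mem_nhds hy) fun z hz => hKeyA z hz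
    have h5 := h3.congr_of_eventuallyEq h4
    refine h5.congr_deriv ?_
    ring
  have ftend : Tendsto f atTop (𝓝 0) :=
    tendsto_zero_of_hasDerivAt_of_integrableOn_Ioi hfd hf'_int hf_int
  have hI2 : ∫ r in Set.Ioi x, deriv f r = - f x := by
    have h := integral_Ioi_of_hasDerivAt_of_tendsto (a := x) (m := 0)
      ((hfd x hx).continuousAt.continuousWithinAt)
      (fun y hy => hfd y (hx.trans hy))
      (hf'_int.mono_set (Set.Ioi_subset_Ioi hx.le)) ftend
    simpa using h
  have intF' : IntegrableOn (deriv f) (Set.Ioi x) volume :=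
    hf'_int.mono_set (Set.Ioi_subset_Ioi hx.le)
  have intF : IntegrableOn f (Set.Ioi x) volume :=
    hf_int.mono_set (Set.Ioi_subset_Ioi hx.le)
  have intW := hwint x hx
  have intFW := hfw x hx
  have intC : ∀ c : ℝ, IntegrableOn (fun r : ℝ => c * (α * r ^ (-α - 1)))
      (Set.Ioi x) volume := fun c => intW.const_mul c
  have hI3 : ∫ r in Set.Ioi x, deriv f r * r ^ (-α) = Dop α f x := by
    have hGderiv : ∀ y ∈ Set.Ioi (0:ℝ), HasDerivAt (fun z => f z * z ^ (-α))
        (deriv f y * y ^ (-α) + f y * (-α * y ^ (-α - 1))) y := by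
      intro y hy
      have h1 : HasDerivAt (fun z : ℝ => z ^ (-α)) (-α * y ^ (-α - 1)) y := by
        simpa using Real.hasDerivAt_rpow_const (x := y) (p := -α) (Or.inl (ne_of_gt hy.out))
      exact (hfd y hy).mul h1
    have i1 := hmul x hx (-α) (by linarith) (deriv f) intF'
    have i2 : IntegrableOn (fun r : ℝ => f r * (-α * r ^ (-α - 1))) (Set.Ioi x) volume := by
      have e : (fun r : ℝ => f r * (-α * r ^ (-α - 1)))
          = fun r => -α * (f r * r ^ (-α - 1)) := funext fun r => by ring
      rw [e]
      exact (hmul x hx (-α - 1) (by linarith) f intF).const_mul (-α)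
    have hGtend : Tendsto (fun z : ℝ => f z * z ^ (-α)) atTop (𝓝 0) := by
      simpa using ftend.mul (tendsto_rpow_neg_atTop hα)
    have h := integral_Ioi_of_hasDerivAt_of_tendsto (a := x) (m := 0)
      ((hGderiv x hx).continuousAt.continuousWithinAt)
      (fun y hy => hGderiv y (hx.trans hy)) (i1.add i2) hGtend
    rw [integral_add i1 i2] at h
    have e2 : ∫ r in Set.Ioi x, f r * (-α * r ^ (-α - 1))
        = - ∫ r in Set.Ioi x, f r * (α * r ^ (-α - 1)) := by
      rw [← MeasureTheory.integral_neg]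
      exact setIntegral_congr_fun measurableSet_Ioi fun r _ => by ring
    rw [e2] at h
    rw [hKeyA x hx]
    linarith
  -- pointwise identities on Ioi x
  have hrmul : ∀ r : ℝ, 0 < r → r * r ^ (-α - 1) = r ^ (-α) := by
    intro r hr
    nth_rewrite 1 [← Real.rpow_one r]
    rw [← Real.rpow_add hr]
    norm_num
  have hrinv : ∀ r : ℝ, 0 < r → r ^ (α + 1) * r ^ (-α - 1) = 1 := by
    intro r hr
    rw [← Real.rpow_add hr]
    norm_num
  have hptδ : Set.EqOn
      (fun r => deriv f r + f r * (α * r ^ (-α - 1)) - deltaOp α f x * (α * r ^ (-α - 1)))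
      (fun r => (deltaOp α f r - deltaOp α f x) * (α * r ^ (-α - 1))) (Set.Ioi x) := by
    intro r hr
    have hr0 : (0:ℝ) < r := hx.trans hr
    simp only [deltaOp]
    have h1 := hrinv r hr0
    field_simp
    linear_combination (-deriv f r) * h1
  have int1 : IntegrableOn (fun r => (f r - f x) * (α * r ^ (-α - 1))) (Set.Ioi x) volume := by
    have e : (fun r => (f r - f x) * (α * r ^ (-α - 1)))
        = fun r => f r * (α * r ^ (-α - 1)) - f x * (α * r ^ (-α - 1)) := funext fun r => by ring
    rw [e]; exact intFW.sub (intC (f x))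
  have iδsum : IntegrableOn (fun r => deriv f r + f r * (α * r ^ (-α - 1)))
      (Set.Ioi x) volume := intF'.add intFW
  have iδall : IntegrableOn
      (fun r => deriv f r + f r * (α * r ^ (-α - 1)) - deltaOp α f x * (α * r ^ (-α - 1)))
      (Set.Ioi x) volume := iδsum.sub (intC _)
  have int2 : IntegrableOn (fun r => (deltaOp α f r - deltaOp α f x) * (α * r ^ (-α - 1)))
      (Set.Ioi x) volume := IntegrableOn.congr_fun iδall hptδ measurableSet_Ioi
  have hDδ : Dop α (deltaOp α f) x
      = - f x + (∫ r in Set.Ioi x, f r * (α * r ^ (-α - 1))) - deltaOp α f x * x ^ (-α) := by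
    have h0 : Dop α (deltaOp α f) x
        = ∫ r in Set.Ioi x, (deltaOp α f r - deltaOp α f x) * (α * r ^ (-α - 1)) := rfl
    have t1 : ∫ r in Set.Ioi x,
          (deriv f r + f r * (α * r ^ (-α - 1)) - deltaOp α f x * (α * r ^ (-α - 1)))
        = (∫ r in Set.Ioi x, (deriv f r + f r * (α * r ^ (-α - 1))))
          - ∫ r in Set.Ioi x, deltaOp α f x * (α * r ^ (-α - 1)) :=
      MeasureTheory.integral_sub iδsum (intC _)
    have t2 : ∫ r in Set.Ioi x, (deriv f r + f r * (α * r ^ (-α - 1)))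
        = (∫ r in Set.Ioi x, deriv f r) + ∫ r in Set.Ioi x, f r * (α * r ^ (-α - 1)) :=
      MeasureTheory.integral_add intF' intFW
    have t3 : ∫ r in Set.Ioi x, deltaOp α f x * (α * r ^ (-α - 1))
        = deltaOp α f x * ∫ r in Set.Ioi x, (α * r ^ (-α - 1)) :=
      MeasureTheory.integral_const_mul _ _
    rw [h0, ← setIntegral_congr_fun measurableSet_Ioi hptδ, t1, t2, t3, hI2, hwval x hx]
  have hgbd : ∀ r ∈ Set.Ioi x, ‖∫ s in Set.Ioi r, f s * (α * s ^ (-α - 1))‖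
      ≤ ∫ s in Set.Ioi x, ‖f s * (α * s ^ (-α - 1))‖ := by
    intro r hr
    refine (norm_integral_le_integral_norm _).trans ?_
    refine setIntegral_mono_set intFW.norm (Filter.Eventually.of_forall fun s => norm_nonneg _) ?_
    exact HasSubset.Subset.eventuallyLE (Set.Ioi_subset_Ioi (le_of_lt hr))
  have hgcont : ContinuousOn (fun z => ∫ r in Set.Ioi z, f r * (α * r ^ (-α - 1)))
      (Set.Ioi 0) := fun y hy => ((hgderiv y hy).continuousAt).continuousWithinAt
  have intGw : IntegrableOn
      (fun r => (∫ s in Set.Ioi r, f s * (α * s ^ (-α - 1))) * (α * r ^ (-α - 1)))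
      (Set.Ioi x) volume := by
    refine Integrable.mono'
      (intW.norm.const_mul (∫ s in Set.Ioi x, ‖f s * (α * s ^ (-α - 1))‖)) ?_ ?_
    · exact ((hgcont.mono hsub).aestronglyMeasurable measurableSet_Ioi).mul
        ((continuousOn_const.mul ((hpc (-α - 1)).mono hsub)).aestronglyMeasurable
          measurableSet_Ioi)
    · rw [ae_restrict_iff' measurableSet_Ioi]
      filter_upwards with r hr
      rw [norm_mul]
      exact mul_le_mul_of_nonneg_right (hgbd r hr) (norm_nonneg _)
  have i2 : IntegrableOn (fun r => (f r * r ^ (-α)) * (α * r ^ (-α - 1)))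
      (Set.Ioi x) volume := hbmul x hx _ (hmul x hx (-α) (by linarith) f intF)
  have iDsub : IntegrableOn
      (fun r => (∫ s in Set.Ioi r, f s * (α * s ^ (-α - 1))) * (α * r ^ (-α - 1))
        - (f r * r ^ (-α)) * (α * r ^ (-α - 1))) (Set.Ioi x) volume := intGw.sub i2
  have intD : IntegrableOn (fun r => Dop α f r * (α * r ^ (-α - 1))) (Set.Ioi x) volume := by
    refine IntegrableOn.congr_fun iDsub ?_ measurableSet_Ioi
    intro r hr
    simp only
    rw [hKeyA r (hx.trans hr)]
    ring
  have intF'a := hmul x hx (-α) (by linarith) (deriv f) intF'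
  have hptL : Set.EqOn
      (fun r => -(deriv f r * r ^ (-α)) + Dop α f r * (α * r ^ (-α - 1)))
      (fun r => Lop α f r * (α * r ^ (-α - 1))) (Set.Ioi x) := by
    intro r hr
    have hr0 : (0:ℝ) < r := hx.trans hr
    simp only [Lop]
    have h1 := hrmul r hr0
    field_simp
    linear_combination deriv f r * h1
  have iLsum : IntegrableOn
      (fun r => -(deriv f r * r ^ (-α)) + Dop α f r * (α * r ^ (-α - 1)))
      (Set.Ioi x) volume := intF'a.neg.add intD
  have intL : IntegrableOn (fun r => Lop α f r * (α * r ^ (-α - 1))) (Set.Ioi x) volume :=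
    IntegrableOn.congr_fun iLsum hptL measurableSet_Ioi
  have iLall : IntegrableOn
      (fun r => Lop α f r * (α * r ^ (-α - 1)) - Lop α f x * (α * r ^ (-α - 1)))
      (Set.Ioi x) volume := intL.sub (intC _)
  have int3 : IntegrableOn (fun r => (Lop α f r - Lop α f x) * (α * r ^ (-α - 1)))
      (Set.Ioi x) volume :=
    IntegrableOn.congr_fun iLall (fun r _ => by ring) measurableSet_Ioi
  have iDall : IntegrableOn
      (fun r => Dop α f r * (α * r ^ (-α - 1)) - Dop α f x * (α * r ^ (-α - 1)))
      (Set.Ioi x) volume := intD.sub (intC _)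
  have int4 : IntegrableOn (fun r => (Dop α f r - Dop α f x) * (α * r ^ (-α - 1)))
      (Set.Ioi x) volume :=
    IntegrableOn.congr_fun iDall (fun r _ => by ring) measurableSet_Ioi
  have hDD : Dop α (Dop α f) x
      = (∫ r in Set.Ioi x, Dop α f r * (α * r ^ (-α - 1))) - Dop α f x * x ^ (-α) := by
    have h0 : Dop α (Dop α f) x
        = ∫ r in Set.Ioi x, (Dop α f r - Dop α f x) * (α * r ^ (-α - 1)) := rfl
    have e : Set.EqOn (fun r => (Dop α f r - Dop α f x) * (α * r ^ (-α - 1)))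
        (fun r => Dop α f r * (α * r ^ (-α - 1)) - Dop α f x * (α * r ^ (-α - 1)))
        (Set.Ioi x) := fun r _ => by simp only; ring
    have t1 : ∫ r in Set.Ioi x,
          (Dop α f r * (α * r ^ (-α - 1)) - Dop α f x * (α * r ^ (-α - 1)))
        = (∫ r in Set.Ioi x, Dop α f r * (α * r ^ (-α - 1)))
          - ∫ r in Set.Ioi x, Dop α f x * (α * r ^ (-α - 1)) :=
      MeasureTheory.integral_sub intD (intC _)
    have t3 : ∫ r in Set.Ioi x, Dop α f x * (α * r ^ (-α - 1))
        = Dop α f x * ∫ r in Set.Ioi x, (α * r ^ (-α - 1)) :=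
      MeasureTheory.integral_const_mul _ _
    rw [h0, setIntegral_congr_fun measurableSet_Ioi e, t1, t3, hwval x hx]
  have hDL : Dop α (Lop α f) x
      = -(Dop α f x) + (∫ r in Set.Ioi x, Dop α f r * (α * r ^ (-α - 1)))
        - Lop α f x * x ^ (-α) := by
    have h0 : Dop α (Lop α f) x
        = ∫ r in Set.Ioi x, (Lop α f r - Lop α f x) * (α * r ^ (-α - 1)) := rfl
    have e : Set.EqOn (fun r => (Lop α f r - Lop α f x) * (α * r ^ (-α - 1)))
        (fun r => -(deriv f r * r ^ (-α)) + Dop α f r * (α * r ^ (-α - 1))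
          - Lop α f x * (α * r ^ (-α - 1))) (Set.Ioi x) := by
      intro r hr
      have h2 := hptL hr
      linear_combination -h2
    have t1 : ∫ r in Set.Ioi x,
          (-(deriv f r * r ^ (-α)) + Dop α f r * (α * r ^ (-α - 1))
            - Lop α f x * (α * r ^ (-α - 1)))
        = (∫ r in Set.Ioi x, (-(deriv f r * r ^ (-α)) + Dop α f r * (α * r ^ (-α - 1))))
          - ∫ r in Set.Ioi x, Lop α f x * (α * r ^ (-α - 1)) :=
      MeasureTheory.integral_sub iLsum (intC _)
    have t2 : ∫ r in Set.Ioi x, (-(deriv f r * r ^ (-α)) + Dop α f r * (α * r ^ (-α - 1)))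
        = (∫ r in Set.Ioi x, -(deriv f r * r ^ (-α)))
          + ∫ r in Set.Ioi x, Dop α f r * (α * r ^ (-α - 1)) :=
      MeasureTheory.integral_add intF'a.neg intD
    have t3 : ∫ r in Set.Ioi x, -(deriv f r * r ^ (-α))
        = -∫ r in Set.Ioi x, deriv f r * r ^ (-α) := MeasureTheory.integral_neg _
    have t4 : ∫ r in Set.Ioi x, Lop α f x * (α * r ^ (-α - 1))
        = Lop α f x * ∫ r in Set.Ioi x, (α * r ^ (-α - 1)) :=
      MeasureTheory.integral_const_mul _ _
    rw [h0, setIntegral_congr_fun measurableSet_Ioi e, t1, t2, t3, t4, hI3, hwval x hx]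
  -- derivatives at x
  have hDdx : deriv (Dop α f) x = -x ^ (-α) * deriv f x := (hKeyD x hx).deriv
  have hpow : HasDerivAt (fun z : ℝ => z ^ (α + 1)) ((α + 1) * x ^ α) x := by
    simpa [show α + 1 - 1 = α from by ring]
      using Real.hasDerivAt_rpow_const (x := x) (p := α + 1) (Or.inl hx.ne')
  have hδhas : HasDerivAt (deltaOp α f)
      (α⁻¹ * ((α + 1) * x ^ α * deriv f x + x ^ (α + 1) * deriv (deriv f) x) + deriv f x) x := by
    have h1 : HasDerivAt (fun z => z ^ (α + 1) * deriv f z)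
        ((α + 1) * x ^ α * deriv f x + x ^ (α + 1) * deriv (deriv f) x) x :=
      hpow.mul (hfd2 x hx)
    have h2 := (h1.const_mul α⁻¹).add (hfd x hx)
    have e : deltaOp α f = fun z => α⁻¹ * (z ^ (α + 1) * deriv f z) + f z :=
      funext fun z => by simp only [deltaOp]; ring
    rw [e]
    exact h2
  have hδdx : deriv (deltaOp α f) x
      = α⁻¹ * ((α + 1) * x ^ α * deriv f x + x ^ (α + 1) * deriv (deriv f) x) + deriv f x :=
    hδhas.deriv
  have hLhas : HasDerivAt (Lop α f)
      (-α⁻¹ * (deriv f x + x * deriv (deriv f) x) + -x ^ (-α) * deriv f x) x := by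
    have h1 : HasDerivAt (fun z : ℝ => z * deriv f z)
        (deriv f x + x * deriv (deriv f) x) x := by
      exact ((hasDerivAt_id' x).mul (hfd2 x hx)).congr_deriv (by ring)
    have h2 := (h1.const_mul (-α⁻¹)).add (hKeyD x hx)
    have e : Lop α f = fun z => -α⁻¹ * (z * deriv f z) + Dop α f z :=
      funext fun z => by simp only [Lop]; ring
    rw [e]
    exact h2
  have hLdx : deriv (Lop α f) x
      = -α⁻¹ * (deriv f x + x * deriv (deriv f) x) + -x ^ (-α) * deriv f x := hLhas.deriv
  have hxa : x ^ (α + 1) = x ^ α * x := by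
    have h : x ^ α * x = x ^ α * x ^ (1:ℝ) := by rw [Real.rpow_one]
    rw [h, ← Real.rpow_add hx]
  -- value equations
  have hval1 : deltaOp α (Dop α f) x
      = α⁻¹ * x ^ (α + 1) * (-x ^ (-α) * deriv f x) + Dop α f x := by
    simp only [deltaOp]; rw [hDdx]
  have hval2 : Lop α (Dop α f) x
      = -α⁻¹ * x * (-x ^ (-α) * deriv f x) + Dop α (Dop α f) x := by
    simp only [Lop]; rw [hDdx]
  have hval3 : deltaOp α (Lop α f) x
      = α⁻¹ * x ^ (α + 1)
          * (-α⁻¹ * (deriv f x + x * deriv (deriv f) x) + -x ^ (-α) * deriv f x)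
        + Lop α f x := by
    simp only [deltaOp]; rw [hLdx]
  have hval4 : Lop α (deltaOp α f) x
      = -α⁻¹ * x
          * (α⁻¹ * ((α + 1) * x ^ α * deriv f x + x ^ (α + 1) * deriv (deriv f) x) + deriv f x)
        + Dop α (deltaOp α f) x := by
    simp only [Lop]; rw [hδdx]
  have id1 : deltaOp α (Dop α f) x - Dop α (deltaOp α f) x = f x := by
    rw [hval1, hDδ, hKeyA x hx]
    simp only [deltaOp]
    ring
  have id2 : Lop α (Dop α f) x - Dop α (Lop α f) x = Dop α f x := by
    rw [hval2, hDD, hDL]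
    simp only [Lop]
    ring
  have id3 : deltaOp α (Lop α f) x - Lop α (deltaOp α f) x = deltaOp α f x := by
    rw [hval3, hval4, hDδ]
    simp only [Lop, deltaOp]
    rw [hKeyA x hx, hxa]
    field_simp
    ring
  exact ⟨int1, int2, int3, int4, (hKeyD x hx).differentiableAt, id1, id2, id3⟩
end
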